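/- The gradient of the ICCL loss L_iccl = log ∑_j exp(q̃₁_j/τ₁) − ∑_i p(i|z₂,τ₂)·(q̃₁_i/τ₁) with respect to q̃₁ equals (1/τ₁)(P(q̃₁,τ₁) − P(z₂,τ₂)), and its squared gradient norm with respect to q₁ equals (‖P(q̃₁,τ₁) − P(z₂,τ₂)‖²/(τ₁²‖q₁‖²))·(1 − ⟨q̃₁, d/‖d‖⟩²) where d = P(q̃₁,τ₁) − P(z₂,τ₂) (assuming d ≠ 0). -/

import Mathlib

open scoped BigOperators
open RealInnerProductSpace

noncomputable def softmax11 {C : ℕ} (τ : ℝ) (x : EuclideanSpace ℝ (Fin C)) :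
    EuclideanSpace ℝ (Fin C) :=
  WithLp.toLp 2 (fun i => Real.exp (x i / τ) / ∑ j, Real.exp (x j / τ))

/-!
The gradient of `u ↦ log ∑ⱼ exp (uⱼ / τ)` is `P(u, τ) / τ`, so in `q̃₁` the loss has gradient
`g = (P(q̃₁, τ₁) - P(z₂, τ₂)) / τ₁`. The derivative of `q ↦ q / ‖q‖` at `q₁` is `‖q₁‖⁻¹` times
the orthogonal projection onto `q₁ᗮ`, so by the chain rule the gradient in `q₁` is
`‖q₁‖⁻¹ (g - ⟪q̃₁, g⟫ q̃₁)`, whose squared norm is `‖q₁‖⁻² (‖g‖² - ⟪q̃₁, g⟫²)` by Pythagoras.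
-/

section Normalization

variable {E : Type*} [NormedAddCommGroup E] [InnerProductSpace ℝ E]

theorem norm_sub_inner_smul_sq {u : E} (hu : ‖u‖ = 1) (g : E) :
    ‖g - ⟪u, g⟫ • u‖ ^ 2 = ‖g‖ ^ 2 - ⟪u, g⟫ ^ 2 := by
  rw [norm_sub_sq_real, real_inner_smul_right, norm_smul, hu, real_inner_comm,
    Real.norm_eq_abs, mul_one, sq_abs]
  ring

theorem hasFDerivAt_norm {x : E} (hx : x ≠ 0) :
    HasFDerivAt (‖·‖) (‖x‖⁻¹ • innerSL ℝ x) x := by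
  have hsq : ‖x‖ ^ 2 ≠ 0 := by positivity
  refine ((hasStrictFDerivAt_norm_sq x).hasFDerivAt.sqrt hsq).congr_of_eventuallyEq ?_
    |>.congr_fderiv ?_
  · exact Filter.Eventually.of_forall fun q => (Real.sqrt_sq (norm_nonneg q)).symm
  · ext h
    simp only [norm_nonneg, Real.sqrt_sq, one_div, mul_inv_rev, smul_apply, coe_innerSL_apply,
      nsmul_eq_mul, Nat.cast_ofNat, smul_eq_mul]
    ring

theorem hasFDerivAt_inv_norm_smul {x : E} (hx : x ≠ 0) :
    HasFDerivAt (fun q : E => ‖q‖⁻¹ • q)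
      (‖x‖⁻¹ • (ContinuousLinearMap.id ℝ E -
        (innerSL ℝ (‖x‖⁻¹ • x)).smulRight (‖x‖⁻¹ • x))) x := by
  have hinv := (hasDerivAt_inv (norm_ne_zero_iff.mpr hx)).comp_hasFDerivAt x (hasFDerivAt_norm hx)
  refine (hinv.smul (hasFDerivAt_id x)).congr_fderiv ?_
  ext h
  simp only [FunLike.coe_add, Pi.add_apply, FunLike.coe_smul, FunLike.coe_sub, Pi.smul_apply,
    Pi.sub_apply, ContinuousLinearMap.smulRight_apply, ContinuousLinearMap.coe_id', id_eq,
    innerSL_apply_apply, real_inner_smul_left, smul_eq_mul, Function.comp_apply]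
  module

variable [CompleteSpace E]

theorem HasGradientAt.comp_inv_norm_smul {f : E → ℝ} {g x : E} (hx : x ≠ 0)
    (hf : HasGradientAt f g (‖x‖⁻¹ • x)) :
    HasGradientAt (fun q => f (‖q‖⁻¹ • q))
      (‖x‖⁻¹ • (g - ⟪‖x‖⁻¹ • x, g⟫ • (‖x‖⁻¹ • x))) x := by
  rw [hasGradientAt_iff_hasFDerivAt] at hf ⊢
  refine (HasFDerivAt.comp (f := fun q : E => ‖q‖⁻¹ • q) x hf
    (hasFDerivAt_inv_norm_smul hx)).congr_fderiv ?_
  ext h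
  simp only [ContinuousLinearMap.comp_apply, FunLike.coe_smul, FunLike.coe_sub, Pi.smul_apply,
    Pi.sub_apply, ContinuousLinearMap.smulRight_apply, ContinuousLinearMap.coe_id', id_eq,
    innerSL_apply_apply, InnerProductSpace.toDual_apply_apply, real_inner_smul_left,
    real_inner_smul_right, inner_sub_left, inner_sub_right]
  rw [real_inner_comm g x]
  ring

end Normalization

section Softmax

variable {C : ℕ}

theorem hasGradientAt_log_sum_exp [NeZero C] (τ : ℝ) (x : EuclideanSpace ℝ (Fin C)) :
    HasGradientAt (fun u : EuclideanSpace ℝ (Fin C) => Real.log (∑ j, Real.exp (u j / τ)))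
      (τ⁻¹ • softmax11 τ x) x := by
  have hexp (j : Fin C) : HasFDerivAt (fun u : EuclideanSpace ℝ (Fin C) => Real.exp (u j / τ))
      (Real.exp (x j / τ) • τ⁻¹ • EuclideanSpace.proj (𝕜 := ℝ) j) x := by
    have := ((EuclideanSpace.proj (𝕜 := ℝ) (ι := Fin C) j).hasFDerivAt (x := x)).mul_const τ⁻¹
    simpa only [div_eq_mul_inv, PiLp.proj_apply] using this.exp
  have hpos : 0 < ∑ j, Real.exp (x j / τ) :=
    Finset.sum_pos (fun j _ => Real.exp_pos _) Finset.univ_nonempty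
  rw [hasGradientAt_iff_hasFDerivAt]
  refine ((HasFDerivAt.fun_sum fun j _ => hexp j).log hpos.ne').congr_fderiv ?_
  ext h
  simp only [smul_apply, sum_apply, PiLp.proj_apply, smul_eq_mul, Finset.mul_sum, softmax11,
    map_smul, InnerProductSpace.toDual_apply_apply, PiLp.inner_apply, RCLike.inner_apply, map_div₀,
    Real.ringHom_apply, map_sum]
  exact Finset.sum_congr rfl fun i _ => by ring

theorem hasGradientAt_log_sum_exp_sub_inner [NeZero C] (τ : ℝ) (p x : EuclideanSpace ℝ (Fin C)) :
    HasGradientAt (fun u : EuclideanSpace ℝ (Fin C) =>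
        Real.log (∑ j, Real.exp (u j / τ)) - ⟪p, u⟫ / τ)
      (τ⁻¹ • (softmax11 τ x - p)) x := by
  have hlin : HasFDerivAt (fun u : EuclideanSpace ℝ (Fin C) => ⟪p, u⟫ / τ)
      (InnerProductSpace.toDual ℝ _ (τ⁻¹ • p)) x := by
    refine (((innerSL ℝ p).hasFDerivAt (x := x)).const_smul τ⁻¹).congr_of_eventuallyEq ?_
      |>.congr_fderiv ?_
    · exact Filter.Eventually.of_forall fun u => by
        simp only [div_eq_inv_mul, coe_innerSL_apply, Pi.smul_apply, smul_eq_mul]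
    · ext h
      simp only [smul_apply, coe_innerSL_apply, smul_eq_mul, map_smul,
        InnerProductSpace.toDual_apply_apply]
  rw [hasGradientAt_iff_hasFDerivAt, smul_sub, map_sub]
  exact (hasGradientAt_log_sum_exp τ x).hasFDerivAt.sub hlin

end Softmax

theorem stmt_11_general {C : ℕ} (hC : 1 ≤ C) (τ₁ τ₂ : ℝ)
    (q₁ z₂ : EuclideanSpace ℝ (Fin C)) (hq : q₁ ≠ 0)
    (d : EuclideanSpace ℝ (Fin C))
    (hd : d = softmax11 τ₁ (‖q₁‖⁻¹ • q₁) - softmax11 τ₂ z₂) (hd0 : d ≠ 0) :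
    gradient (fun u : EuclideanSpace ℝ (Fin C) =>
        Real.log (∑ j, Real.exp (u j / τ₁)) - ⟪softmax11 τ₂ z₂, u⟫ / τ₁)
        (‖q₁‖⁻¹ • q₁)
      = (1 / τ₁) • d ∧
    ‖gradient (fun q : EuclideanSpace ℝ (Fin C) =>
        Real.log (∑ j, Real.exp ((‖q‖⁻¹ • q) j / τ₁))
          - ⟪softmax11 τ₂ z₂, ‖q‖⁻¹ • q⟫ / τ₁) q₁‖ ^ 2
      = ‖d‖ ^ 2 / (τ₁ ^ 2 * ‖q₁‖ ^ 2) *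
          (1 - ⟪‖q₁‖⁻¹ • q₁, ‖d‖⁻¹ • d⟫ ^ 2) := by
  have : NeZero C := ⟨by omega⟩
  have hgrad := hasGradientAt_log_sum_exp_sub_inner τ₁ (softmax11 τ₂ z₂) (‖q₁‖⁻¹ • q₁)
  rw [← hd, ← one_div] at hgrad
  refine ⟨hgrad.gradient, ?_⟩
  have hq' : ‖q₁‖ ≠ 0 := norm_ne_zero_iff.mpr hq
  have hd' : ‖d‖ ≠ 0 := norm_ne_zero_iff.mpr hd0
  have hunit : ‖‖q₁‖⁻¹ • q₁‖ = 1 := by rw [norm_smul, norm_inv, norm_norm, inv_mul_cancel₀ hq']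
  rw [(hgrad.comp_inv_norm_smul hq).gradient, norm_smul, mul_pow,
    norm_sub_inner_smul_sq hunit, norm_smul, real_inner_smul_right, real_inner_smul_right]
  simp only [Real.norm_eq_abs, abs_inv, abs_norm, one_div, mul_pow, inv_pow, sq_abs]
  field_simp

theorem stmt_11 {C : ℕ} (hC : 1 ≤ C) (τ₁ τ₂ : ℝ) (hτ₁ : 0 < τ₁) (hτ₂ : 0 < τ₂)
    (q₁ z₂ : EuclideanSpace ℝ (Fin C)) (hq : q₁ ≠ 0)
    (d : EuclideanSpace ℝ (Fin C))
    (hd : d = softmax11 τ₁ (‖q₁‖⁻¹ • q₁) - softmax11 τ₂ z₂) (hd0 : d ≠ 0) :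
    gradient (fun u : EuclideanSpace ℝ (Fin C) =>
        Real.log (∑ j, Real.exp (u j / τ₁)) - ⟪softmax11 τ₂ z₂, u⟫ / τ₁)
        (‖q₁‖⁻¹ • q₁)
      = (1 / τ₁) • d ∧
    ‖gradient (fun q : EuclideanSpace ℝ (Fin C) =>
        Real.log (∑ j, Real.exp ((‖q‖⁻¹ • q) j / τ₁))
          - ⟪softmax11 τ₂ z₂, ‖q‖⁻¹ • q⟫ / τ₁) q₁‖ ^ 2
      = ‖d‖ ^ 2 / (τ₁ ^ 2 * ‖q₁‖ ^ 2) *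
          (1 - ⟪‖q₁‖⁻¹ • q₁, ‖d‖⁻¹ • d⟫ ^ 2) :=
  stmt_11_general hC τ₁ τ₂ q₁ z₂ hq d hd hd0
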